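/- arXiv:1905.00003 — 2 statements merged into one kernel-verified Lean document; each statement's English description precedes it below -/
import Mathlib

section
/- Let V be a finite-dimensional vector space over a field F, let A_1,…,A_n, C be subspaces such that V = A_1 ⊕ ⋯ ⊕ A_n and C ∩ (Σ_{i≠k} A_i) = 0 for every k. Let S_1,…,S_m be nonempty subsets of {1,…,n} whose associated n×m 0/1 matrix over F (entry (j,i) is 1 iff j ∈ S_i) has rank m. Set B'' := { i : |S_i| = 1 } and B' := { i : 1 < |S_i| < n }, and for each i ∈ B' let B_i be a subspace of V. Assume: (ii) for every i ∈ B', B_i ⊆ Σ_{j∈S_i} A_j; and (iv) for every i ∈ B', C ⊆ (Σ_{j∉S_i} A_j) + B_i. Then m · dim C ≤ dim( Σ_{i∈B'} B_i + Σ_{i∈B'', S_i={j}} A_j + C' ), where C' := C if some S_i equals {1,…,n} and C' := 0 otherwise. -/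
/-!
Let `p_j` be the projections of `V = A_1 ⊕ ⋯ ⊕ A_n`. The linear map
`(c_i) ↦ ∑_i ∑_{j ∈ S_i} p_j c_i` from `C^m` to `V` lands in the right-hand side: for `i ∈ B'`,
(iv) and (ii) make `∑_{j ∈ S_i} p_j c` the `B_i`-component of `c ∈ C`. It is injective: applying
`p_k` to a vector of its kernel gives `p_k (∑_{i ∋ k} c_i) = 0`, so `∑_{i ∋ k} c_i = 0` because
`ker p_k = ∑_{i ≠ k} A_i` meets `C` trivially, and then all `c_i = 0` because the incidence
matrix of the `S_i` has full column rank.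
-/

open Finset Module

theorem Submodule.finsetSum_le {R M ι : Type*} [Semiring R] [AddCommMonoid M] [Module R M]
    {s : Finset ι} {p : ι → Submodule R M} {q : Submodule R M} (h : ∀ i ∈ s, p i ≤ q) :
    ∑ i ∈ s, p i ≤ q :=
  Finset.sum_induction p (· ≤ q) (fun _ _ ha hb => sup_le ha hb) bot_le h

namespace DirectSum.IsInternal

variable {R M : Type*} [Semiring R] [AddCommMonoid M] [Module R M]

section

variable {ι : Type*} [DecidableEq ι] {A : ι → Submodule R M} (hA : IsInternal A)

noncomputable def proj (j : ι) : M →ₗ[R] M :=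
  (A j).subtype ∘ₗ component R ι (fun i => A i) j ∘ₗ
    (LinearEquiv.ofBijective (coeLinearMap A) hA).symm.toLinearMap

theorem proj_mem (j : ι) (v : M) : hA.proj j v ∈ A j :=
  Submodule.coe_mem _

theorem proj_of_mem {j : ι} {v : M} (hv : v ∈ A j) : hA.proj j v = v := by
  simp [proj, ← apply_eq_component, hA.ofBijective_coeLinearMap_of_mem hv]

theorem proj_of_mem_of_ne {i j : ι} (hij : i ≠ j) {v : M} (hv : v ∈ A i) : hA.proj j v = 0 := by
  simp [proj, ← apply_eq_component, hA.ofBijective_coeLinearMap_of_mem_ne hij hv]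

theorem proj_proj (j k : ι) (v : M) :
    hA.proj k (hA.proj j v) = if j = k then hA.proj k v else 0 := by
  split_ifs with h
  · subst h; exact hA.proj_of_mem (hA.proj_mem j v)
  · exact hA.proj_of_mem_of_ne h (hA.proj_mem j v)

theorem proj_sum_proj (T : Finset ι) (k : ι) (v : M) :
    hA.proj k (∑ j ∈ T, hA.proj j v) = if k ∈ T then hA.proj k v else 0 := by
  simp [map_sum, proj_proj]

theorem proj_eq_zero_of_mem_sum {T : Finset ι} {k : ι} (hk : k ∉ T) {v : M}
    (hv : v ∈ ∑ t ∈ T, A t) : hA.proj k v = 0 := by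
  have hle : ∑ t ∈ T, A t ≤ LinearMap.ker (hA.proj k) := Submodule.finsetSum_le fun t ht _ hx =>
    hA.proj_of_mem_of_ne (ne_of_mem_of_not_mem ht hk) hx
  exact hle hv

theorem sum_proj_mem_sum (T : Finset ι) (v : M) : ∑ j ∈ T, hA.proj j v ∈ ∑ j ∈ T, A j :=
  Submodule.sum_mem _ fun j hj =>
    Finset.single_le_sum_of_canonicallyOrdered (f := A) hj (hA.proj_mem j v)

variable [Fintype ι]

theorem sum_proj (v : M) : ∑ j, hA.proj j v = v := by
  set e := LinearEquiv.ofBijective (coeLinearMap A) hA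
  conv_rhs => rw [← e.apply_symm_apply v, ← sum_univ_of (e.symm v), map_sum]
  exact Finset.sum_congr rfl fun j _ => (coeLinearMap_of A j _).symm

theorem sum_proj_of_mem_sum {T : Finset ι} {v : M} (hv : v ∈ ∑ t ∈ T, A t) :
    ∑ j ∈ T, hA.proj j v = v := by
  conv_rhs => rw [← hA.sum_proj v, ← Finset.sum_add_sum_compl T]
  rw [Finset.sum_eq_zero (s := Tᶜ) fun j hj => hA.proj_eq_zero_of_mem_sum (mem_compl.1 hj) hv,
    add_zero]

theorem ker_proj (k : ι) : LinearMap.ker (hA.proj k) = ∑ i ∈ univ.erase k, A i := by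
  refine le_antisymm (fun v hv => ?_) (fun v hv => hA.proj_eq_zero_of_mem_sum (by simp) hv)
  rw [← hA.sum_proj v, ← Finset.sum_erase_add _ _ (mem_univ k), LinearMap.mem_ker.1 hv, add_zero]
  exact hA.sum_proj_mem_sum _ v

theorem sum_proj_mem_of_mem_sum_compl_add {T : Finset ι} {B : Submodule R M}
    (hB : B ≤ ∑ j ∈ T, A j) {v : M} (hv : v ∈ (∑ j ∈ Tᶜ, A j) + B) : ∑ j ∈ T, hA.proj j v ∈ B := by
  obtain ⟨x, hx, b, hb, rfl⟩ := Submodule.mem_sup.1 hv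
  have hx0 : ∀ j ∈ T, hA.proj j x = 0 := fun j hj =>
    hA.proj_eq_zero_of_mem_sum (Finset.notMem_compl.2 hj) hx
  simpa [map_add, Finset.sum_add_distrib, Finset.sum_eq_zero hx0, hA.sum_proj_of_mem_sum (hB hb)]
    using hb

end

theorem sum_proj_mem_sum_add_sum_add_ite {n m : ℕ} {A : Fin n → Submodule R M}
    (hA : IsInternal A)
    {C : Submodule R M} {S : Fin m → Finset (Fin n)} {B : Fin m → Submodule R M}
    (h2 : ∀ i, 1 < (S i).card → (S i).card < n → B i ≤ ∑ j ∈ S i, A j)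
    (h4 : ∀ i, 1 < (S i).card → (S i).card < n → C ≤ (∑ j ∈ (S i)ᶜ, A j) + B i)
    (i : Fin m) {c : M} (hc : c ∈ C) :
    ∑ j ∈ S i, hA.proj j c ∈
      (∑ i ∈ univ.filter (fun i => 1 < (S i).card ∧ (S i).card < n), B i)
        + (∑ i ∈ univ.filter (fun i => (S i).card = 1), ∑ j ∈ S i, A j)
        + (if ∃ i, S i = (univ : Finset (Fin n)) then C else ⊥) := by
  obtain h0 | h1 | hmid | hfull :
      (S i).card = 0 ∨ (S i).card = 1 ∨ (1 < (S i).card ∧ (S i).card < n) ∨ n ≤ (S i).card := by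
    omega
  · rw [card_eq_zero.1 h0, sum_empty]
    exact zero_mem _
  · refine Submodule.mem_sup_left (Submodule.mem_sup_right ?_)
    exact single_le_sum_of_canonicallyOrdered (f := fun i => ∑ j ∈ S i, A j)
      (mem_filter.2 ⟨mem_univ i, h1⟩) (hA.sum_proj_mem_sum _ c)
  · refine Submodule.mem_sup_left (Submodule.mem_sup_left ?_)
    exact single_le_sum_of_canonicallyOrdered (f := B) (mem_filter.2 ⟨mem_univ i, hmid⟩)
      (hA.sum_proj_mem_of_mem_sum_compl_add (h2 i hmid.1 hmid.2) (h4 i hmid.1 hmid.2 hc))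
  · have hSi : S i = univ := eq_univ_of_card _ ((card_le_univ _).antisymm (by simpa using hfull))
    refine Submodule.mem_sup_right ?_
    rwa [if_pos ⟨i, hSi⟩, hSi, hA.sum_proj]

end DirectSum.IsInternal

theorem Matrix.mulVec_injective_of_rank_eq_card {K ι κ : Type*} [Field K] [Fintype ι]
    [Fintype κ] {M : Matrix ι κ K} (hM : M.rank = Fintype.card κ) :
    Function.Injective M.mulVec := by
  have hker := M.mulVecLin.finrank_range_add_finrank_ker
  rw [← Matrix.rank, hM, Module.finrank_fintype_fun_eq_card, Nat.add_eq_left,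
    Submodule.finrank_eq_zero] at hker
  exact LinearMap.ker_eq_bot.1 hker

theorem Matrix.eq_zero_of_rank_eq_card_of_sum_smul_eq_zero {K N ι κ : Type*} [Field K]
    [AddCommGroup N] [Module K N] [Fintype ι] [Fintype κ] {M : Matrix ι κ K}
    (hM : M.rank = Fintype.card κ) {c : κ → N} (hc : ∀ k, ∑ i, M k i • c i = 0) : c = 0 := by
  funext i
  refine (Module.forall_dual_apply_eq_zero_iff K (c i)).1 fun φ => ?_
  have hφc : M.mulVec (fun i => φ (c i)) = M.mulVec 0 := funext fun k => by
    simpa [Matrix.mulVec, dotProduct] using congrArg φ (hc k)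
  exact congrFun (Matrix.mulVec_injective_of_rank_eq_card hM hφc) i

namespace DirectSum.IsInternal

variable {K V ι κ : Type*} [Field K] [AddCommGroup V] [Module K V] [Fintype ι] [DecidableEq ι]
  [Fintype κ] {A : ι → Submodule K V} (hA : IsInternal A)

theorem eq_zero_of_sum_sum_proj_eq_zero {C : Submodule K V}
    (hC : ∀ k, C ⊓ ∑ i ∈ univ.erase k, A i = ⊥) {S : κ → Finset ι}
    (hS : (Matrix.of fun j i => if j ∈ S i then (1 : K) else 0).rank = Fintype.card κ)
    {c : κ → C} (hc : ∑ i, ∑ j ∈ S i, hA.proj j (c i) = 0) : c = 0 := by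
  refine Matrix.eq_zero_of_rank_eq_card_of_sum_smul_eq_zero hS fun k => ?_
  have hinj : Disjoint C (LinearMap.ker (hA.proj k)) := by
    rw [disjoint_iff, hA.ker_proj, hC k]
  refine Subtype.ext (LinearMap.disjoint_ker.1 hinj _ (Submodule.coe_mem _) ?_)
  have hck := congrArg (hA.proj k) hc
  rw [map_sum] at hck
  simp only [proj_sum_proj, map_zero] at hck
  simpa [map_sum, ite_smul, apply_ite] using hck

end DirectSum.IsInternal

theorem conditional_ineq_rank_full_general (F V : Type*) [Field F] [AddCommGroup V]
    [Module F V] [FiniteDimensional F V] (n m : ℕ)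
    (A : Fin n → Submodule F V) (hA : DirectSum.IsInternal A)
    (C : Submodule F V) (hC : ∀ k, C ⊓ (∑ i ∈ univ.erase k, A i) = ⊥)
    (S : Fin m → Finset (Fin n))
    (hrank : (Matrix.of fun (j : Fin n) (i : Fin m) =>
      if j ∈ S i then (1 : F) else 0).rank = m)
    (B : Fin m → Submodule F V)
    (h2 : ∀ i, 1 < (S i).card → (S i).card < n → B i ≤ ∑ j ∈ S i, A j)
    (h4 : ∀ i, 1 < (S i).card → (S i).card < n → C ≤ (∑ j ∈ (S i)ᶜ, A j) + B i) :
    m * Module.finrank F C ≤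
      Module.finrank F
        (((∑ i ∈ univ.filter (fun i => 1 < (S i).card ∧ (S i).card < n), B i)
          + (∑ i ∈ univ.filter (fun i => (S i).card = 1), ∑ j ∈ S i, A j)
          + (if ∃ i, S i = (univ : Finset (Fin n)) then C else ⊥)) : Submodule F V) := by
  let Φ : (Fin m → C) →ₗ[F] V := ∑ i, (∑ j ∈ S i, hA.proj j) ∘ₗ C.subtype ∘ₗ LinearMap.proj i
  have hΦ (c : Fin m → C) : Φ c = ∑ i, ∑ j ∈ S i, hA.proj j (c i) := by simp [Φ]
  have hinj : Function.Injective Φ := (injective_iff_map_eq_zero Φ).2 fun c hc =>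
    hA.eq_zero_of_sum_sum_proj_eq_zero hC (by rwa [Fintype.card_fin]) (by rwa [hΦ] at hc)
  calc m * finrank F C = finrank F (Fin m → C) := by simp [Module.finrank_pi_fintype]
    _ = finrank F (LinearMap.range Φ) := (LinearMap.finrank_range_of_inj hinj).symm
    _ ≤ _ := Submodule.finrank_mono <| by
      rintro _ ⟨c, rfl⟩
      rw [hΦ]
      exact Submodule.sum_mem _ fun i _ => hA.sum_proj_mem_sum_add_sum_add_ite h2 h4 i (c i).2

/-- Claim 2(b) of the paper: suppose `V = A_1 ⊕ ⋯ ⊕ A_n`,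
`C ∩ (Σ_{i≠k} A_i) = 0` for every `k`, the sets `S_1,…,S_m` are nonempty and
their associated `n×m` 0/1 matrix over `F` has rank `m`.  With
`B'' = {i : |S_i| = 1}` and `B' = {i : 1 < |S_i| < n}`, assume
(ii) `B_i ⊆ Σ_{j∈S_i} A_j` for `i ∈ B'` and
(iv) `C ⊆ Σ_{j∉S_i} A_j + B_i` for `i ∈ B'`.  Then
`m·dim C ≤ dim(Σ_{i∈B'} B_i + Σ_{i∈B'', S_i={j}} A_j + C')`, where
`C' = C` if some `S_i = {1,…,n}` and `C' = 0` otherwise. -/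
theorem conditional_ineq_rank_full (F V : Type*) [Field F] [AddCommGroup V]
    [Module F V] [FiniteDimensional F V] (n m : ℕ)
    (A : Fin n → Submodule F V) (hA : DirectSum.IsInternal A)
    (C : Submodule F V) (hC : ∀ k, C ⊓ (∑ i ∈ univ.erase k, A i) = ⊥)
    (S : Fin m → Finset (Fin n)) (hS : ∀ i, (S i).Nonempty)
    (hrank : (Matrix.of fun (j : Fin n) (i : Fin m) =>
      if j ∈ S i then (1 : F) else 0).rank = m)
    (B : Fin m → Submodule F V)
    (h2 : ∀ i, 1 < (S i).card → (S i).card < n → B i ≤ ∑ j ∈ S i, A j)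
    (h4 : ∀ i, 1 < (S i).card → (S i).card < n → C ≤ (∑ j ∈ (S i)ᶜ, A j) + B i) :
    m * Module.finrank F C ≤
      Module.finrank F
        (((∑ i ∈ univ.filter (fun i => 1 < (S i).card ∧ (S i).card < n), B i)
          + (∑ i ∈ univ.filter (fun i => (S i).card = 1), ∑ j ∈ S i, A j)
          + (if ∃ i, S i = (univ : Finset (Fin n)) then C else ⊥)) : Submodule F V) :=
  conditional_ineq_rank_full_general F V n m A hA C hC S hrank B h2 h4
end

section
/- Let n ≥ 7 and let t be an integer with 2 ≤ t ≤ ⌊(n−1)/2⌋ − 1, and set M := n − t − 2. Let F be a finite field of arbitrary characteristic, let V be a finite-dimensional F-vector space with dim V ≤ n − t − 3, and let A_1,…,A_M, B_1,…,B_{t+1}, C be subspaces of V. Then inequality (a) holds. -/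
open Finset

variable {F V : Type*} [Field F] [AddCommGroup V] [Module F V]

/-- `eH X` is the dimension of the subspace `X`, as an integer
(the "entropy" `H(X)` of the paper). -/
noncomputable def eH (X : Submodule F V) : ℤ := Module.finrank F X

/-- Left-hand side of inequality (a):
`H(B_1,…,B_{t+1},A_{t+2},…,A_M) + (t+2)(M−t−1)·H(C)`. -/
noncomputable def lhsA (t M : ℕ) (A B : ℕ → Submodule F V) (C : Submodule F V) : ℤ :=
  eH ((∑ i ∈ Icc 1 (t+1), B i) + ∑ i ∈ Icc (t+2) M, A i)
    + ((t : ℤ) + 2) * ((M : ℤ) - t - 1) * eH C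

/-- Right-hand side of inequality (a):
`(M−1)·I(A_1+⋯+A_M ; C) + (t+2)·Σ_{i=t+2}^{M} H(A_i)
 + ((t+2)(M−t)−1)·( H(C | A_1,…,A_M) + Σ_{i=1}^{M} I(Σ_{j≠i} A_j ; C) )
 + Σ_{i=1}^{t+1} ( H(B_i | A_j : j≠i) + H(B_i | A_i, C)
      + I(A_1+⋯+A_i ; A_{i+1}+⋯+A_{t+1}) + I(A_1+⋯+A_{i−1} ; A_i) )`. -/
noncomputable def rhsA (t M : ℕ) (A B : ℕ → Submodule F V) (C : Submodule F V) : ℤ :=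
  ((M : ℤ) - 1) * eH ((∑ i ∈ Icc 1 M, A i) ⊓ C)
  + ((t : ℤ) + 2) * ∑ i ∈ Icc (t+2) M, eH (A i)
  + (((t : ℤ) + 2) * ((M : ℤ) - t) - 1) *
      ((eH (C + ∑ i ∈ Icc 1 M, A i) - eH (∑ i ∈ Icc 1 M, A i))
        + ∑ i ∈ Icc 1 M, eH ((∑ j ∈ (Icc 1 M).erase i, A j) ⊓ C))
  + ∑ i ∈ Icc 1 (t+1),
      ((eH (B i + ∑ j ∈ (Icc 1 M).erase i, A j) - eH (∑ j ∈ (Icc 1 M).erase i, A j))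
        + (eH (B i + (A i + C)) - eH (A i + C))
        + eH ((∑ j ∈ Icc 1 i, A j) ⊓ (∑ j ∈ Icc (i+1) (t+1), A j))
        + eH ((∑ j ∈ Icc 1 (i-1), A j) ⊓ A i))

/-- Inequality (a) of the paper. -/
def IneqA (t M : ℕ) (A B : ℕ → Submodule F V) (C : Submodule F V) : Prop :=
  lhsA t M A B C ≤ rhsA t M A B C

/-!
Since `dim V < M`, some `A_{i₀}` lies in `A_1 + ⋯ + A_{i₀-1}`, so omitting it does not change
`A_1 + ⋯ + A_M`, and `I(A_1+⋯+A_M ; C)` is one of the terms of `Σ_i I(Σ_{j≠i} A_j ; C)`.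
Each `H(B_i)` is at most `H(B_i | Σ_{j≠i} A_j) + H(B_i | A_i, C)` plus the dimension of
`(Σ_{j≠i} A_j) ∩ (A_i + C)`, and the modular law bounds the latter by
`H(C) + H(A_{t+2}+⋯+A_M)` and the two intersection terms of index `i`. Summing over `i` and
splitting `H(C) = H(C | A_1,…,A_M) + I(A_1+⋯+A_M ; C)` gives (a): the `t+1` copies of `H(C)` from
the sum and the `(t+2)(M−t−1)` on the left add up to the coefficient `(t+2)(M−t)−1`.
-/

lemma eH_nonneg (X : Submodule F V) : 0 ≤ eH X := Int.natCast_nonneg _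

lemma sum_erase_eq_sum_of_le {ι : Type*} [DecidableEq ι] {s : Finset ι} {i : ι}
    {A : ι → Submodule F V} (hi : i ∈ s) (h : A i ≤ ∑ j ∈ s.erase i, A j) :
    ∑ j ∈ s.erase i, A j = ∑ j ∈ s, A j := by
  refine le_antisymm (sum_le_sum_of_subset (erase_subset i s)) ?_
  rw [← add_sum_erase s A hi, Submodule.add_eq_sup]
  exact sup_le h le_rfl

section FiniteDimensional

variable [FiniteDimensional F V]

lemma eH_mono {X Y : Submodule F V} (h : X ≤ Y) : eH X ≤ eH Y := by
  unfold eH; exact_mod_cast Submodule.finrank_mono h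

lemma eH_sup_add_eH_inf (X Y : Submodule F V) : eH (X ⊔ Y) + eH (X ⊓ Y) = eH X + eH Y := by
  unfold eH; exact_mod_cast Submodule.finrank_sup_add_finrank_inf_eq X Y

lemma eH_sup_le (X Y : Submodule F V) : eH (X ⊔ Y) ≤ eH X + eH Y := by
  linarith [eH_sup_add_eH_inf X Y, eH_nonneg (X ⊓ Y)]

lemma eH_sum_le {ι : Type*} (s : Finset ι) (f : ι → Submodule F V) :
    eH (∑ i ∈ s, f i) ≤ ∑ i ∈ s, eH (f i) := by
  induction s using Finset.cons_induction with
  | empty => rw [sum_empty, sum_empty, eH, Submodule.zero_eq_bot, finrank_bot, Nat.cast_zero]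
  | cons a s ha ih =>
    rw [sum_cons, sum_cons, Submodule.add_eq_sup]
    linarith [eH_sup_le (f a) (∑ i ∈ s, f i)]

lemma eH_inf_sup_le (X Y Z : Submodule F V) : eH (X ⊓ (Y ⊔ Z)) ≤ eH Y + eH (X ⊓ Z) := by
  have h := eH_sup_add_eH_inf (X ⊓ (Y ⊔ Z)) Z
  have h₁ : eH (X ⊓ (Y ⊔ Z) ⊔ Z) ≤ eH (Y ⊔ Z) := eH_mono (sup_le inf_le_right le_sup_right)
  have h₂ : eH (X ⊓ (Y ⊔ Z) ⊓ Z) ≤ eH (X ⊓ Z) := eH_mono (inf_le_inf_right _ inf_le_left)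
  linarith [eH_sup_le Y Z]

lemma eH_inf_add_eH_inf_le (X Y Z : Submodule F V) :
    eH (X ⊓ Y) + eH (X ⊓ Z) ≤ eH X + eH (Y ⊓ Z) := by
  have h := eH_sup_add_eH_inf (X ⊓ Y) (X ⊓ Z)
  have h₁ : eH (X ⊓ Y ⊔ X ⊓ Z) ≤ eH X := eH_mono (sup_le inf_le_left inf_le_left)
  have h₂ : eH (X ⊓ Y ⊓ (X ⊓ Z)) ≤ eH (Y ⊓ Z) := eH_mono (inf_le_inf inf_le_right inf_le_right)
  linarith

lemma eH_sup_inf_le (X Y Z : Submodule F V) :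
    eH ((X ⊔ Y) ⊓ Z) ≤ eH ((X ⊔ Z) ⊓ Y) + eH (X ⊓ Z) := by
  have h := eH_sup_add_eH_inf ((X ⊔ Y) ⊓ Z) X
  have h₁ : eH ((X ⊔ Y) ⊓ Z ⊔ X) ≤ eH (X ⊔ Y ⊓ (X ⊔ Z)) := by
    refine eH_mono ?_
    rw [← sup_inf_assoc_of_le Y (le_sup_left : X ≤ X ⊔ Z)]
    exact sup_le (inf_le_inf_left _ le_sup_right) (le_inf le_sup_left le_sup_left)
  have h₂ : eH ((X ⊔ Y) ⊓ Z ⊓ X) ≤ eH (X ⊓ Z) :=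
    eH_mono (le_inf inf_le_right (inf_le_left.trans inf_le_right))
  rw [inf_comm (X ⊔ Z)]
  linarith [eH_sup_le X (Y ⊓ (X ⊔ Z))]

lemma eH_le_sup_sub_add_sup_sub_add_inf (B E D : Submodule F V) :
    eH B ≤ (eH (B ⊔ E) - eH E) + (eH (B ⊔ D) - eH D) + eH (E ⊓ D) := by
  linarith [eH_sup_add_eH_inf B E, eH_sup_add_eH_inf B D, eH_inf_add_eH_inf_le B E D]

lemma eH_sup_sup_inf_sup_le (P Q T X C : Submodule F V) :
    eH ((P ⊔ Q ⊔ T) ⊓ (X ⊔ C)) ≤ eH C + eH T + eH ((P ⊔ X) ⊓ Q) + eH (P ⊓ X) := by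
  have h₁ := eH_inf_sup_le (P ⊔ Q ⊔ T) C X
  have h₂ := eH_inf_sup_le X T (P ⊔ Q)
  have h₃ := eH_sup_inf_le P Q X
  rw [sup_comm C] at h₁
  rw [sup_comm T, inf_comm X, inf_comm X] at h₂
  linarith

lemma le_finrank_sum_Icc {A : ℕ → Submodule F V} {k : ℕ}
    (h : ∀ i ∈ Icc 1 k, ¬ A i ≤ ∑ j ∈ Icc 1 (i - 1), A j) :
    k ≤ Module.finrank F ↥(∑ j ∈ Icc 1 k, A j) := by
  induction k with
  | zero => exact Nat.zero_le _
  | succ k ih =>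
    have hnew : ¬ A (k + 1) ≤ ∑ j ∈ Icc 1 k, A j := h (k + 1) (by simp)
    have hlt : ∑ j ∈ Icc 1 k, A j < ∑ j ∈ Icc 1 (k + 1), A j := by
      rw [sum_Icc_succ_top (by omega), Submodule.add_eq_sup]
      exact left_lt_sup.mpr hnew
    have := Submodule.finrank_lt_finrank_of_lt hlt
    have := ih fun i hi ↦ h i (Icc_subset_Icc_right (by omega) hi)
    omega

lemma exists_le_sum_Icc_of_finrank_lt {A : ℕ → Submodule F V} {M : ℕ}
    (hV : Module.finrank F V < M) : ∃ i ∈ Icc 1 M, A i ≤ ∑ j ∈ Icc 1 (i - 1), A j := by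
  by_contra! h
  have := le_finrank_sum_Icc h
  have := Submodule.finrank_le (∑ j ∈ Icc 1 M, A j)
  omega

lemma eH_sum_inf_le_sum_eH_sum_erase_inf {A : ℕ → Submodule F V} {M : ℕ}
    (hV : Module.finrank F V < M) (C : Submodule F V) :
    eH ((∑ i ∈ Icc 1 M, A i) ⊓ C) ≤ ∑ i ∈ Icc 1 M, eH ((∑ j ∈ (Icc 1 M).erase i, A j) ⊓ C) := by
  obtain ⟨i₀, hi₀, hle⟩ := exists_le_sum_Icc_of_finrank_lt (A := A) hV
  have hsub : Icc 1 (i₀ - 1) ⊆ (Icc 1 M).erase i₀ := fun j hj ↦ by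
    simp only [mem_Icc, mem_erase] at hj hi₀ ⊢; omega
  have herase := sum_erase_eq_sum_of_le hi₀ (hle.trans (sum_le_sum_of_subset hsub))
  calc eH ((∑ i ∈ Icc 1 M, A i) ⊓ C) = eH ((∑ j ∈ (Icc 1 M).erase i₀, A j) ⊓ C) := by
        rw [herase]
    _ ≤ _ := single_le_sum (f := fun i ↦ eH ((∑ j ∈ (Icc 1 M).erase i, A j) ⊓ C))
        (fun i _ ↦ eH_nonneg _) hi₀

lemma eH_B_le_rhsA_summand {t M i : ℕ} (A B : ℕ → Submodule F V) (C : Submodule F V)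
    (hi : i ∈ Icc 1 (t + 1)) (htM : t + 1 ≤ M) :
    eH (B i) ≤ (eH (B i + ∑ j ∈ (Icc 1 M).erase i, A j) - eH (∑ j ∈ (Icc 1 M).erase i, A j))
        + (eH (B i + (A i + C)) - eH (A i + C))
        + eH ((∑ j ∈ Icc 1 i, A j) ⊓ (∑ j ∈ Icc (i + 1) (t + 1), A j))
        + eH ((∑ j ∈ Icc 1 (i - 1), A j) ⊓ A i)
        + (eH C + eH (∑ j ∈ Icc (t + 2) M, A j)) := by
  rw [mem_Icc] at hi
  have hsplit : (Icc 1 M).erase i = Icc 1 (i - 1) ∪ Icc (i + 1) (t + 1) ∪ Icc (t + 2) M := by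
    ext j; simp only [mem_erase, mem_Icc, mem_union]; omega
  have hdisj₁ : Disjoint (Icc 1 (i - 1)) (Icc (i + 1) (t + 1)) :=
    disjoint_left.2 fun j hj hj' ↦ by simp only [mem_Icc] at hj hj'; omega
  have hdisj₂ : Disjoint (Icc 1 (i - 1) ∪ Icc (i + 1) (t + 1)) (Icc (t + 2) M) :=
    disjoint_left.2 fun j hj hj' ↦ by simp only [mem_union, mem_Icc] at hj hj'; omega
  have hprefix : ∑ j ∈ Icc 1 i, A j = (∑ j ∈ Icc 1 (i - 1), A j) ⊔ A i := by
    obtain ⟨k, rfl⟩ : ∃ k, i = k + 1 := ⟨i - 1, by omega⟩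
    rw [sum_Icc_succ_top (by omega), Submodule.add_eq_sup, Nat.add_sub_cancel]
  rw [hsplit, sum_union hdisj₂, sum_union hdisj₁, hprefix]
  simp only [Submodule.add_eq_sup]
  linarith [eH_le_sup_sub_add_sup_sub_add_inf (B i)
      ((∑ j ∈ Icc 1 (i - 1), A j) ⊔ (∑ j ∈ Icc (i + 1) (t + 1), A j) ⊔ ∑ j ∈ Icc (t + 2) M, A j)
      (A i ⊔ C),
    eH_sup_sup_inf_sup_le (∑ j ∈ Icc 1 (i - 1), A j) (∑ j ∈ Icc (i + 1) (t + 1), A j)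
      (∑ j ∈ Icc (t + 2) M, A j) (A i) C]

end FiniteDimensional

theorem ineqA_of_finrank_lt [FiniteDimensional F V] {t M : ℕ} (htM : t + 1 ≤ M)
    (hV : Module.finrank F V < M) (A B : ℕ → Submodule F V) (C : Submodule F V) :
    IneqA t M A B C := by
  have hK : (0 : ℤ) ≤ (t + 2) * (M - t) - 1 := by
    have : (t : ℤ) + 1 ≤ M := by exact_mod_cast htM
    nlinarith
  have hB := sum_le_sum fun i (hi : i ∈ Icc 1 (t + 1)) ↦ eH_B_le_rhsA_summand A B C hi htM
  rw [sum_add_distrib, sum_const, Nat.card_Icc, Nat.add_sub_cancel, nsmul_eq_mul,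
    Nat.cast_add_one] at hB
  have hlhs := eH_sup_le (∑ i ∈ Icc 1 (t + 1), B i) (∑ i ∈ Icc (t + 2) M, A i)
  have hC := eH_sup_add_eH_inf C (∑ i ∈ Icc 1 M, A i)
  rw [inf_comm] at hC
  have hI := mul_le_mul_of_nonneg_left (eH_sum_inf_le_sum_eH_sum_erase_inf (A := A) hV C) hK
  have hA := mul_le_mul_of_nonneg_left (eH_sum_le (Icc (t + 2) M) A)
    (by positivity : (0 : ℤ) ≤ t + 2)
  have hMC := mul_nonneg (by omega : (0 : ℤ) ≤ M - 1) (eH_nonneg ((∑ i ∈ Icc 1 M, A i) ⊓ C))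
  unfold IneqA lhsA rhsA
  simp only [Submodule.add_eq_sup] at hB ⊢
  linear_combination hlhs + eH_sum_le (Icc 1 (t + 1)) B + hB + hA + hI + hMC
    - ((t + 2) * (M - t) - 1 : ℤ) * hC

theorem ineqA_of_small_dim_general (n t M : ℕ) (hn : 7 ≤ n)
    (ht : t ≤ (n - 1) / 2 - 1) (hM : M = n - t - 2)
    (F V : Type*) [Field F] [AddCommGroup V] [Module F V]
    [FiniteDimensional F V] (hdim : Module.finrank F V ≤ n - t - 3)
    (A B : ℕ → Submodule F V) (C : Submodule F V) :
    IneqA t M A B C :=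
  ineqA_of_finrank_lt (by omega) (by omega) A B C

/-- If `dim V ≤ n − t − 3`, inequality (a) holds over any finite field,
regardless of the characteristic. -/
theorem ineqA_of_small_dim (n t M : ℕ) (hn : 7 ≤ n) (ht2 : 2 ≤ t)
    (ht : t ≤ (n - 1) / 2 - 1) (hM : M = n - t - 2)
    (F V : Type*) [Field F] [Fintype F] [AddCommGroup V] [Module F V]
    [FiniteDimensional F V] (hdim : Module.finrank F V ≤ n - t - 3)
    (A B : ℕ → Submodule F V) (C : Submodule F V) :
    IneqA t M A B C :=
  ineqA_of_small_dim_general n t M hn ht hM F V hdim A B C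
end
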